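/- For all α > 0, r ∈ (0,1), and positive integers n satisfying 1/(α r n^r) + α r/n^{1-r} ≤ 1/14, and for every integer k ≥ 1, the tail sum satisfies ∑_{v=(2k+1)n−k}^∞ e^{-α v^r} < (14/13) · (e^{-α((2k+1)n−k)^r}/(α r)) · ((2k+1)n−k)^{1-r}. -/

import Mathlib

/-!
Put `f x = exp (-α x ^ r)` and `F x = f x * x ^ (1 - r) / (α r)`, so that
`-F' x = f x * (1 - (1 - r) / (α r x ^ r))`. For `x ≥ M` the mean value theorem and the
monotonicity of `f` give `(1 - a) f (x + 1) ≤ F x - F (x + 1)` with `a = 1 / (α r M ^ r)`, and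
telescoping bounds `∑_{v ≥ 1} f (M + v)` by `F M / (1 - a)`. The first term is `f M = b F M`
with `b = α r / M ^ (1 - r)`. Both `a` and `b` decrease from `n` to `M = (2k+1)n - k ≥ n`, so
`a + b ≤ 1/14`, and then `b + 1 / (1 - a) < 14/13`.
-/

open Real Finset

/-- The leading term of the asymptotic expansion of `∫ t in Ioi x, exp (-α * t ^ r)`. -/
noncomputable def stretchedExpTail (α r x : ℝ) : ℝ :=
  exp (-α * x ^ r) * x ^ (1 - r) / (α * r)

section StretchedExpTail

variable {α r : ℝ}

theorem hasDerivAt_stretchedExpTail (hαr : α * r ≠ 0) {x : ℝ} (hx : 0 < x) :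
    HasDerivAt (stretchedExpTail α r)
      (-exp (-α * x ^ r) * (1 - (1 - r) / (α * r * x ^ r))) x := by
  have hpow : HasDerivAt (fun t : ℝ => -α * t ^ r) (-α * (r * x ^ (r - 1))) x :=
    (Real.hasDerivAt_rpow_const (Or.inl hx.ne')).const_mul (-α)
  have hpow' : HasDerivAt (fun t : ℝ => t ^ (1 - r)) ((1 - r) * x ^ (1 - r - 1)) x :=
    Real.hasDerivAt_rpow_const (Or.inl hx.ne')
  have hxr : x ^ (r - 1) * x ^ (1 - r) = 1 := by
    rw [← Real.rpow_add hx]; norm_num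
  have hx1r : x ^ (1 - r - 1) = (x ^ r)⁻¹ := by
    rw [← Real.rpow_neg hx.le]; ring_nf
  have hxr0 : x ^ r ≠ 0 := (Real.rpow_pos_of_pos hx r).ne'
  obtain ⟨hα0, hr0⟩ := mul_ne_zero_iff.1 hαr
  refine ((hpow.exp.mul hpow').div_const (α * r)).congr_deriv ?_
  rw [hx1r]
  field_simp
  linear_combination (-(α * x ^ r * r)) * hxr

theorem one_sub_le_one_sub_div_of_le (hα : 0 < α) (hr : 0 < r) {M x : ℝ} (hM : 0 < M)
    (hx : M ≤ x) :
    1 - 1 / (α * r * M ^ r) ≤ 1 - (1 - r) / (α * r * x ^ r) := by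
  have hMx : M ^ r ≤ x ^ r := Real.rpow_le_rpow hM.le hx hr.le
  have hMr : 0 < α * r * M ^ r := by positivity
  have hxr : 0 < α * r * x ^ r := hMr.trans_le (by gcongr)
  refine sub_le_sub_left ?_ 1
  calc (1 - r) / (α * r * x ^ r) ≤ 1 / (α * r * x ^ r) := by gcongr; linarith
    _ ≤ 1 / (α * r * M ^ r) := by gcongr

theorem mul_exp_le_stretchedExpTail_sub (hα : 0 < α) (hr : 0 < r) {M x : ℝ} (hM : 0 < M)
    (ha : 1 / (α * r * M ^ r) ≤ 1) (hx : M ≤ x) :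
    (1 - 1 / (α * r * M ^ r)) * exp (-α * (x + 1) ^ r)
      ≤ stretchedExpTail α r x - stretchedExpTail α r (x + 1) := by
  have hx0 : 0 < x := hM.trans_le hx
  obtain ⟨ξ, ⟨hxξ, hξx⟩, hslope⟩ :=
    exists_hasDerivAt_eq_slope (stretchedExpTail α r) _ (lt_add_one x)
      (fun y hy => (hasDerivAt_stretchedExpTail (by positivity)
        (hx0.trans_le hy.1)).continuousAt.continuousWithinAt)
      (fun y hy => hasDerivAt_stretchedExpTail (by positivity) (hx0.trans hy.1))
  have hξ : 0 < ξ := hx0.trans hxξ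
  rw [add_sub_cancel_left, div_one] at hslope
  have hexp : exp (-α * (x + 1) ^ r) ≤ exp (-α * ξ ^ r) :=
    exp_le_exp.2 <|
      mul_le_mul_of_nonpos_left (Real.rpow_le_rpow hξ.le hξx.le hr.le) (by linarith)
  have hcoef := one_sub_le_one_sub_div_of_le hα hr hM (hx.trans hxξ.le)
  calc (1 - 1 / (α * r * M ^ r)) * exp (-α * (x + 1) ^ r)
      ≤ (1 - (1 - r) / (α * r * ξ ^ r)) * exp (-α * ξ ^ r) :=
        mul_le_mul hcoef hexp (exp_pos _).le ((sub_nonneg.2 ha).trans hcoef)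
    _ = stretchedExpTail α r x - stretchedExpTail α r (x + 1) := by linarith

end StretchedExpTail

theorem sum_range_le_div_of_mul_le_sub {g G : ℕ → ℝ} {c : ℝ} (hc : 0 < c) (hG : ∀ j, 0 ≤ G j)
    (h : ∀ j, c * g j ≤ G j - G (j + 1)) (N : ℕ) :
    ∑ j ∈ range N, g j ≤ G 0 / c := by
  have htel : c * ∑ j ∈ range N, g j ≤ G 0 - G N := by
    rw [mul_sum, ← sum_range_sub' G N]
    exact sum_le_sum fun j _ => h j
  rw [le_div_iff₀ hc]
  linarith [hG N]

theorem tsum_exp_neg_mul_rpow_le {α r M : ℝ} (hα : 0 < α) (hr : 0 < r) (hM : 0 < M)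
    (ha : 1 / (α * r * M ^ r) < 1) :
    ∑' v : ℕ, exp (-α * (M + v) ^ r)
      ≤ (α * r / M ^ (1 - r) + 1 / (1 - 1 / (α * r * M ^ r))) * stretchedExpTail α r M := by
  set a := 1 / (α * r * M ^ r)
  set F := stretchedExpTail α r
  have hF : ∀ j : ℕ, 0 ≤ F (M + j) := fun j => by
    have : 0 < M + j := by positivity
    simp only [F, stretchedExpTail]; positivity
  have hstep : ∀ j : ℕ,
      (1 - a) * exp (-α * (M + (j + 1 : ℕ)) ^ r) ≤ F (M + j) - F (M + (j + 1 : ℕ)) := by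
    intro j
    push_cast
    rw [← add_assoc]
    exact mul_exp_le_stretchedExpTail_sub hα hr hM ha.le (le_add_of_nonneg_right j.cast_nonneg)
  have hpartial : ∀ N, ∑ j ∈ range N, exp (-α * (M + (j + 1 : ℕ)) ^ r) ≤ F M / (1 - a) := by
    simpa using sum_range_le_div_of_mul_le_sub (sub_pos.2 ha) hF hstep
  have hsummable : Summable fun v : ℕ => exp (-α * (M + v) ^ r) :=
    (summable_nat_add_iff 1).1 (summable_of_sum_range_le (fun _ => (exp_pos _).le) hpartial)
  have hfirst : exp (-α * M ^ r) = α * r / M ^ (1 - r) * F M := by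
    simp only [F, stretchedExpTail]
    field_simp [(Real.rpow_pos_of_pos hM (1 - r)).ne']
  rw [hsummable.tsum_eq_zero_add, Nat.cast_zero, add_zero, hfirst, add_mul, one_div_mul_eq_div]
  exact add_le_add_right (Real.tsum_le_of_sum_range_le (fun _ => (exp_pos _).le) hpartial) _

theorem add_one_div_one_sub_lt {a b : ℝ} (ha : 0 ≤ a) (hb : 0 < b) (hab : a + b ≤ 1 / 14) :
    b + 1 / (1 - a) < 14 / 13 := by
  have h1a : 0 < 1 - a := by linarith
  have hinv : 1 / (1 - a) ≤ 1 + 14 / 13 * a := by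
    rw [div_le_iff₀ h1a]
    nlinarith
  linarith

theorem tail_sum_bound_general (α r : ℝ) (hα : 0 < α) (hr0 : 0 < r) (hr1 : r < 1)
    (n : ℕ) (hn : 1 ≤ n)
    (hcond : 1 / (α * r * (n : ℝ) ^ r) + α * r / (n : ℝ) ^ (1 - r) ≤ 1 / 14)
    (k : ℕ) :
    ∑' v : ℕ, Real.exp (-α * ((((2 * k + 1) * n - k + v : ℕ) : ℝ)) ^ r)
      < 14 / 13 * (Real.exp (-α * ((((2 * k + 1) * n - k : ℕ) : ℝ)) ^ r) / (α * r)) *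
        ((((2 * k + 1) * n - k : ℕ) : ℝ)) ^ (1 - r) := by
  set m := (2 * k + 1) * n - k
  have hnm : (n : ℝ) ≤ m := by
    have : k + n ≤ (2 * k + 1) * n := by nlinarith
    exact_mod_cast (by omega : n ≤ m)
  have hM : (0 : ℝ) < m := (Nat.cast_pos.2 hn).trans_le hnm
  have hab : 1 / (α * r * (m : ℝ) ^ r) + α * r / (m : ℝ) ^ (1 - r) ≤ 1 / 14 := by
    refine le_trans ?_ hcond
    gcongr
  have hb : 0 < α * r / (m : ℝ) ^ (1 - r) := by positivity
  have hF : 0 < stretchedExpTail α r m := by unfold stretchedExpTail; positivity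
  calc ∑' v : ℕ, exp (-α * ((m + v : ℕ) : ℝ) ^ r)
      ≤ (α * r / (m : ℝ) ^ (1 - r) + 1 / (1 - 1 / (α * r * (m : ℝ) ^ r)))
          * stretchedExpTail α r m := by
        push_cast
        exact tsum_exp_neg_mul_rpow_le hα hr0 hM (by linarith)
    _ < 14 / 13 * stretchedExpTail α r m := by
        gcongr
        exact add_one_div_one_sub_lt (by positivity) hb hab
    _ = _ := by unfold stretchedExpTail; ring

theorem tail_sum_bound (α r : ℝ) (hα : 0 < α) (hr0 : 0 < r) (hr1 : r < 1)
    (n : ℕ) (hn : 1 ≤ n)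
    (hcond : 1 / (α * r * (n : ℝ) ^ r) + α * r / (n : ℝ) ^ (1 - r) ≤ 1 / 14)
    (k : ℕ) (hk : 1 ≤ k) :
    ∑' v : ℕ, Real.exp (-α * ((((2 * k + 1) * n - k + v : ℕ) : ℝ)) ^ r)
      < 14 / 13 * (Real.exp (-α * ((((2 * k + 1) * n - k : ℕ) : ℝ)) ^ r) / (α * r)) *
        ((((2 * k + 1) * n - k : ℕ) : ℝ)) ^ (1 - r) :=
  tail_sum_bound_general α r hα hr0 hr1 n hn hcond k
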